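/- A map on fermion modes is valid according to the superselection rule if and only if its Choi matrix commutes with the doubled parity operator: let M be a ℂ-linear map on 2^m × 2^m complex matrices, and for each integer p ≥ 0 let M ⊗ id_p denote the induced map on 2^{m+p} × 2^{m+p} matrices (acting as M on the first tensor factor), let C_m = Z^{⊗m} and C_p = Z^{⊗p}, and define P_p(X) = ½(X + (C_m ⊗ C_p) X (C_m ⊗ C_p)). Then the condition [(M ⊗ id_p) ∘ P_p = P_p ∘ (M ⊗ id_p) ∘ P_p for all integers p ≥ 0] holds if and only if (C_m ⊗ C_m) Choi(M) = Choi(M) (C_m ⊗ C_m). -/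

import Mathlib

open Matrix

noncomputable section

def σZ : Matrix (Fin 2) (Fin 2) ℂ := !![1, 0; 0, -1]

/-- Parity operator `C = Z^{⊗m}`: diagonal with entry `(-1)^{|n̄|}`. -/
def parity (m : ℕ) : Matrix (Fin m → Fin 2) (Fin m → Fin 2) ℂ :=
  Matrix.of fun n n' => ∏ j, σZ (n j) (n' j)

/-- The slice of a matrix on a product index, fixing the second components. -/
def matSlice {A B : Type*} (b b' : B) :
    Matrix (A × B) (A × B) ℂ →ₗ[ℂ] Matrix A A ℂ where
  toFun X := Matrix.of fun a a' => X (a, b) (a', b')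
  map_add' _ _ := rfl
  map_smul' _ _ := rfl

/-- The induced map `M ⊗ id` on a composite system. -/
def tensId {A B : Type*} (M : Matrix A A ℂ →ₗ[ℂ] Matrix A A ℂ) :
    Matrix (A × B) (A × B) ℂ →ₗ[ℂ] Matrix (A × B) (A × B) ℂ where
  toFun X := Matrix.of fun p q => M (matSlice p.2 q.2 X) p.1 q.1
  map_add' X Y := by
    ext ⟨a, b⟩ ⟨a', b'⟩
    simp [Matrix.add_apply, map_add]
  map_smul' c X := by
    ext ⟨a, b⟩ ⟨a', b'⟩
    simp [Matrix.smul_apply, _root_.map_smul]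

/-- The (unnormalised) maximally entangled state `|Φ⟩⟨Φ|`,
`Φ = ∑ n̄, |n̄⟩ ⊗ |n̄⟩`. -/
def phiMat (A : Type*) [DecidableEq A] : Matrix (A × A) (A × A) ℂ :=
  Matrix.of fun p q => (if p.1 = p.2 then 1 else 0) * (if q.1 = q.2 then 1 else 0)

/-- The Choi matrix `Choi(M) = (M ⊗ id)(|Φ⟩⟨Φ|)`. -/
def choi {A : Type*} [DecidableEq A] (M : Matrix A A ℂ →ₗ[ℂ] Matrix A A ℂ) :
    Matrix (A × A) (A × A) ℂ :=
  tensId M (phiMat A)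

/-- The projection superoperator `X ↦ ½(X + P X P)`. -/
def projSup {A : Type*} [Fintype A] (P : Matrix A A ℂ) :
    Matrix A A ℂ →ₗ[ℂ] Matrix A A ℂ where
  toFun X := (1 / 2 : ℂ) • (X + P * X * P)
  map_add' X Y := by
    simp only [Matrix.mul_add, Matrix.add_mul, smul_add]
    module
  map_smul' c X := by
    simp only [Matrix.mul_smul, Matrix.smul_mul, smul_add, smul_smul, mul_comm,
      RingHom.id_apply]

/-!
Write `ε` for the diagonal of `C_m`. A matrix commutes with an involutive diagonal matrix
`diagonal d` exactly when it is even, i.e. its `(i, j)` entry vanishes unless `d i = d j`, and `P_p`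
is the projection onto the even matrices for `d (a, b) = ε a * ε b`. A matrix on `A × B` is even
for such a product grading iff each of its `(b, b')` slices has parity `ε b * ε b'`. Since the
`(b, b')` slice of `Choi(M)` is `M` applied to the matrix unit `E_{b b'}`, the right-hand side says
that `M` preserves the parity of matrix units, hence of all matrices, and this is what makes
`(M ⊗ id_p) ∘ P_p` land in the even matrices. Conversely, `|Φ⟩⟨Φ|` is even, so the left-hand side
for `p = m` and `X = |Φ⟩⟨Φ|` says that `Choi(M)` is even.
-/

theorem mul_eq_one_iff_eq_of_mul_self_eq_one {G : Type*} [Monoid G] {x y : G} (hy : y * y = 1) :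
    x * y = 1 ↔ x = y :=
  ⟨fun h => by rw [← mul_one x, ← hy, ← mul_assoc, h, one_mul], fun h => h ▸ hy⟩

theorem mul_mul_self_eq_one {G : Type*} [CommMonoid G] {x y : G} (hx : x * x = 1)
    (hy : y * y = 1) : x * y * (x * y) = 1 := by
  rw [mul_mul_mul_comm, hx, hy, one_mul]

section Homogeneous

variable {A : Type*}

/-- For a `±1`-valued grading `ε`, the matrices of parity `s`. -/
def homogeneous (ε : A → ℂ) (s : ℂ) : Submodule ℂ (Matrix A A ℂ) where
  carrier := {Y | ∀ i j, ε i * ε j ≠ s → Y i j = 0}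
  add_mem' hY hZ i j h := by simp [hY i j h, hZ i j h]
  zero_mem' _ _ _ := rfl
  smul_mem' c _ hY i j h := by simp [hY i j h]

theorem mem_homogeneous {ε : A → ℂ} {s : ℂ} {Y : Matrix A A ℂ} :
    Y ∈ homogeneous ε s ↔ ∀ i j, ε i * ε j ≠ s → Y i j = 0 :=
  Iff.rfl

theorem single_mem_homogeneous [DecidableEq A] (ε : A → ℂ) (i j : A) (c : ℂ) :
    single i j c ∈ homogeneous ε (ε i * ε j) := by
  rintro i' j' h
  exact single_apply_of_ne _ _ _ _ _ fun ⟨hi, hj⟩ => h (hi ▸ hj ▸ rfl)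

theorem map_mem_homogeneous [Fintype A] [DecidableEq A] {ε : A → ℂ}
    {M : Matrix A A ℂ →ₗ[ℂ] Matrix A A ℂ}
    (hM : ∀ i j, M (single i j 1) ∈ homogeneous ε (ε i * ε j))
    {s : ℂ} {Y : Matrix A A ℂ} (hY : Y ∈ homogeneous ε s) : M Y ∈ homogeneous ε s := by
  rw [matrix_eq_sum_single Y, map_sum]
  refine Submodule.sum_mem _ fun i _ => ?_
  rw [map_sum]
  refine Submodule.sum_mem _ fun j _ => ?_
  by_cases hs : ε i * ε j = s
  · have hsingle : single i j (Y i j) = Y i j • single i j 1 := by simp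
    rw [hsingle, _root_.map_smul, ← hs]
    exact Submodule.smul_mem _ _ (hM i j)
  · simp [hY i j hs]

end Homogeneous

section ProjSup

variable {A : Type*} [Fintype A] [DecidableEq A] {d : A → ℂ}

theorem projSup_diagonal_apply (d : A → ℂ) (X : Matrix A A ℂ) (i j : A) :
    projSup (diagonal d) X i j = (1 / 2) * (1 + d i * d j) * X i j := by
  simp only [projSup, LinearMap.coe_mk, AddHom.coe_mk, Matrix.smul_apply, Matrix.add_apply,
    diagonal_mul, mul_diagonal, smul_eq_mul]
  ring

theorem projSup_diagonal_eq_self_iff {X : Matrix A A ℂ} :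
    projSup (diagonal d) X = X ↔ X ∈ homogeneous d 1 := by
  simp only [mem_homogeneous, ← Matrix.ext_iff, projSup_diagonal_apply]
  refine forall₂_congr fun i j => ?_
  have h : 1 / 2 * (1 + d i * d j) * X i j = X i j ↔ (d i * d j - 1) * X i j = 0 := by
    constructor <;> intro h
    · linear_combination 2 * h
    · linear_combination (1 / 2) * h
  rw [h, mul_eq_zero, sub_eq_zero, or_iff_not_imp_left]

theorem projSup_diagonal_mem_homogeneous (hd : ∀ i, d i * d i = 1) (X : Matrix A A ℂ) :
    projSup (diagonal d) X ∈ homogeneous d 1 := by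
  intro i j h
  have : d i * d j = -1 :=
    (mul_self_eq_one_iff.mp (mul_mul_self_eq_one (hd i) (hd j))).resolve_left h
  rw [projSup_diagonal_apply, this]
  ring

theorem diagonal_mul_eq_mul_diagonal_iff (hd : ∀ i, d i * d i = 1) {Y : Matrix A A ℂ} :
    diagonal d * Y = Y * diagonal d ↔ Y ∈ homogeneous d 1 := by
  simp only [mem_homogeneous, ← Matrix.ext_iff, diagonal_mul, mul_diagonal,
    Ne, mul_eq_one_iff_eq_of_mul_self_eq_one (hd _)]
  refine forall₂_congr fun i j => ?_
  rw [mul_comm, mul_eq_mul_left_iff, or_iff_not_imp_left]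

end ProjSup

section Slices

variable {A B : Type*}

@[simp]
theorem matSlice_apply (b b' : B) (Z : Matrix (A × B) (A × B) ℂ) (a a' : A) :
    matSlice b b' Z a a' = Z (a, b) (a', b') :=
  rfl

theorem matSlice_tensId (M : Matrix A A ℂ →ₗ[ℂ] Matrix A A ℂ) (b b' : B)
    (Z : Matrix (A × B) (A × B) ℂ) :
    matSlice b b' (tensId M Z) = M (matSlice b b' Z) :=
  rfl

theorem matSlice_phiMat [DecidableEq A] (b b' : A) :
    matSlice b b' (phiMat A) = single b b' 1 := by
  ext a a'
  simp only [matSlice_apply, phiMat, of_apply, single_apply]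
  grind

theorem mem_homogeneous_prod_iff {ε : A → ℂ} {δ : B → ℂ} (hδ : ∀ b, δ b * δ b = 1)
    {Z : Matrix (A × B) (A × B) ℂ} :
    Z ∈ homogeneous (fun q => ε q.1 * δ q.2) 1 ↔
      ∀ b b', matSlice b b' Z ∈ homogeneous ε (δ b * δ b') := by
  have key (a a' : A) (b b' : B) :
      ε a * δ b * (ε a' * δ b') = 1 ↔ ε a * ε a' = δ b * δ b' := by
    rw [← mul_eq_one_iff_eq_of_mul_self_eq_one (mul_mul_self_eq_one (hδ b) (hδ b')),
      mul_mul_mul_comm]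
  simp only [mem_homogeneous, Prod.forall, Ne, key, matSlice_apply]
  exact ⟨fun h b b' a a' => h a b a' b', fun h a b a' b' => h b b' a a'⟩

theorem phiMat_mem_homogeneous [DecidableEq A] {ε : A → ℂ} (hε : ∀ a, ε a * ε a = 1) :
    phiMat A ∈ homogeneous (fun q => ε q.1 * ε q.2) 1 :=
  (mem_homogeneous_prod_iff hε).mpr fun b b' =>
    matSlice_phiMat b b' ▸ single_mem_homogeneous ε b b' 1

theorem choi_mem_homogeneous_iff [DecidableEq A] {ε : A → ℂ} (hε : ∀ a, ε a * ε a = 1)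
    (M : Matrix A A ℂ →ₗ[ℂ] Matrix A A ℂ) :
    choi M ∈ homogeneous (fun q => ε q.1 * ε q.2) 1 ↔
      ∀ b b', M (single b b' 1) ∈ homogeneous ε (ε b * ε b') := by
  simp only [choi, mem_homogeneous_prod_iff hε, matSlice_tensId, matSlice_phiMat]

end Slices

theorem σZ_apply_self_mul_self (i : Fin 2) : σZ i i * σZ i i = 1 := by
  fin_cases i <;> simp [σZ]

theorem σZ_apply_of_ne {i j : Fin 2} (h : i ≠ j) : σZ i j = 0 := by
  fin_cases i <;> fin_cases j <;> simp_all [σZ]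

def paritySign (m : ℕ) (a : Fin m → Fin 2) : ℂ :=
  ∏ j, σZ (a j) (a j)

theorem paritySign_mul_self (m : ℕ) (a : Fin m → Fin 2) : paritySign m a * paritySign m a = 1 := by
  rw [paritySign, ← Finset.prod_mul_distrib]
  exact Finset.prod_eq_one fun j _ => σZ_apply_self_mul_self (a j)

theorem parity_eq_diagonal (m : ℕ) : parity m = diagonal (paritySign m) := by
  ext a a'
  by_cases h : a = a'
  · simp [h, parity, paritySign]
  · obtain ⟨j, hj⟩ := Function.ne_iff.mp h
    rw [diagonal_apply_ne _ h]
    exact Finset.prod_eq_zero (Finset.mem_univ j) (σZ_apply_of_ne hj)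

open Kronecker in
theorem parity_kronecker_parity (m p : ℕ) :
    parity m ⊗ₖ parity p = diagonal fun q => paritySign m q.1 * paritySign p q.2 := by
  rw [parity_eq_diagonal, parity_eq_diagonal, diagonal_kronecker_diagonal]

open Kronecker in
theorem valid_map_iff_choi_commutes_general (m : ℕ)
    (M : Matrix (Fin m → Fin 2) (Fin m → Fin 2) ℂ →ₗ[ℂ]
        Matrix (Fin m → Fin 2) (Fin m → Fin 2) ℂ) :
    (∀ p : ℕ,
      ∀ X : Matrix ((Fin m → Fin 2) × (Fin p → Fin 2))
          ((Fin m → Fin 2) × (Fin p → Fin 2)) ℂ,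
        tensId M (projSup (parity m ⊗ₖ parity p) X) =
          projSup (parity m ⊗ₖ parity p) (tensId M (projSup (parity m ⊗ₖ parity p) X))) ↔
      (parity m ⊗ₖ parity m) * choi M = choi M * (parity m ⊗ₖ parity m) := by
  have hε := paritySign_mul_self
  have hεε (p : ℕ) (q : (Fin m → Fin 2) × (Fin p → Fin 2)) :=
    mul_mul_self_eq_one (hε m q.1) (hε p q.2)
  simp only [parity_kronecker_parity, diagonal_mul_eq_mul_diagonal_iff (hεε m)]
  constructor
  · intro hvalid
    have hchoi := hvalid m (phiMat _)
    rwa [projSup_diagonal_eq_self_iff.mpr (phiMat_mem_homogeneous (hε m)), eq_comm,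
      projSup_diagonal_eq_self_iff] at hchoi
  · intro hchoi p X
    rw [eq_comm, projSup_diagonal_eq_self_iff, mem_homogeneous_prod_iff (hε p)]
    intro b b'
    rw [matSlice_tensId]
    refine map_mem_homogeneous ((choi_mem_homogeneous_iff (hε m) M).mp hchoi) ?_
    exact (mem_homogeneous_prod_iff (hε p)).mp (projSup_diagonal_mem_homogeneous (hεε p) X) b b'

open Kronecker in
theorem valid_map_iff_choi_commutes (m : ℕ) (hm : 1 ≤ m)
    (M : Matrix (Fin m → Fin 2) (Fin m → Fin 2) ℂ →ₗ[ℂ]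
        Matrix (Fin m → Fin 2) (Fin m → Fin 2) ℂ) :
    (∀ p : ℕ,
      ∀ X : Matrix ((Fin m → Fin 2) × (Fin p → Fin 2))
          ((Fin m → Fin 2) × (Fin p → Fin 2)) ℂ,
        tensId M (projSup (parity m ⊗ₖ parity p) X) =
          projSup (parity m ⊗ₖ parity p) (tensId M (projSup (parity m ⊗ₖ parity p) X))) ↔
      (parity m ⊗ₖ parity m) * choi M = choi M * (parity m ⊗ₖ parity m) :=
  valid_map_iff_choi_commutes_general m M
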